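/- Variational cost of a high excursion (from the proof of Lemma 3.1, Step 2): Let V : ℝ → ℝ be continuous with V(s) ≥ 0 for all s, let M ≥ 4, and assume V(u) ≥ V(3M) for all u ≥ 3M. Fix Δ ∈ (0, 2] and define, for continuously differentiable u : ℝ → ℝ, E_Δ(u) = ∫_{−1}^{1} ( (1/2)·(u'(x))² + (Δ²/4)·V(u(x)) ) dx. Let B^bc be the set of continuously differentiable u with u(−1) = u(1) = 3M, and let B₊^bc be the set of u ∈ B^bc for which there exists x₀ ∈ [−1, 1] with u(x₀) ≥ 4M − 1. Then inf_{u ∈ B₊^bc} E_Δ(u) − inf_{u ∈ B^bc} E_Δ(u) ≥ (M − 1)². -/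

import Mathlib

/-!
Let `u` be a competitor that starts and ends at `3M` and reaches `4M - 1` at `x₀`, and let
`[a, b] ∋ x₀` be the maximal interval on which `u ≥ 3M`, so `u a = u b = 3M`. By Cauchy–Schwarz,
climbing by `M - 1` and coming back down within length `b - a ≤ 2` costs kinetic energy at least
`(M - 1)²`, while the potential energy on `[a, b]` is at least `(Δ²/4) V(3M) (b - a)` since `V`
does not go below `V(3M)` above `3M`. Flattening `u` on `[a, b]` to the constant `3M`, except in
layers of width `h` at the ends where a smooth cutoff keeps the result `C¹`, yields a competitor
of the unconstrained problem whose energy on `[a, b]` is `(Δ²/4) V(3M) (b - a) + O(h)`.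
-/

open MeasureTheory Set Real

lemma exists_last_crossing {u : ℝ → ℝ} (hu : Continuous u) {p x₀ k : ℝ} (hpx : p ≤ x₀)
    (hup : u p ≤ k) (hkx : k ≤ u x₀) :
    ∃ a ∈ Icc p x₀, u a = k ∧ ∀ y ∈ Icc a x₀, k ≤ u y := by
  set A := Icc p x₀ ∩ {x | u x ≤ k}
  have hbdd : BddAbove A := ⟨x₀, fun x hx => hx.1.2⟩
  have haA : sSup A ∈ A :=
    (isClosed_Icc.inter (isClosed_le hu continuous_const)).csSup_mem ⟨p, ⟨le_rfl, hpx⟩, hup⟩ hbdd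
  have hge : ∀ y ∈ Icc (sSup A) x₀, k ≤ u y := by
    intro y hy
    by_contra! hlt
    -- a later point at level `k` would lie in `A`, beyond its supremum
    obtain ⟨z, hz, hzk⟩ := intermediate_value_Icc hy.2 hu.continuousOn ⟨hlt.le, hkx⟩
    have : z ≤ sSup A := le_csSup hbdd ⟨⟨haA.1.1.trans (hy.1.trans hz.1), hz.2⟩, hzk.le⟩
    have hzy : z = y := le_antisymm (this.trans hy.1) hz.1
    exact hlt.ne (hzy ▸ hzk)
  exact ⟨sSup A, haA.1, le_antisymm haA.2 (hge _ ⟨le_rfl, haA.1.2⟩), hge⟩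

lemma exists_first_crossing {u : ℝ → ℝ} (hu : Continuous u) {x₀ q k : ℝ} (hxq : x₀ ≤ q)
    (huq : u q ≤ k) (hkx : k ≤ u x₀) :
    ∃ b ∈ Icc x₀ q, u b = k ∧ ∀ y ∈ Icc x₀ b, k ≤ u y := by
  obtain ⟨a, ha, hua, hge⟩ := exists_last_crossing (u := fun x => u (-x)) (by fun_prop)
    (neg_le_neg hxq) (by simpa using huq) (by simpa using hkx)
  refine ⟨-a, ⟨le_neg.2 ha.2, neg_le.2 ha.1⟩, hua, fun y hy => ?_⟩
  simpa using hge (-y) ⟨le_neg.2 hy.2, neg_le_neg hy.1⟩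

lemma exists_excursion_interval {u : ℝ → ℝ} (hu : Continuous u) {p q x₀ k : ℝ}
    (hx₀ : x₀ ∈ Icc p q) (hup : u p ≤ k) (huq : u q ≤ k) (hkx : k ≤ u x₀) :
    ∃ a b, p ≤ a ∧ x₀ ∈ Icc a b ∧ b ≤ q ∧ u a = k ∧ u b = k ∧ ∀ y ∈ Icc a b, k ≤ u y := by
  obtain ⟨a, ha, hua, hgea⟩ := exists_last_crossing hu hx₀.1 hup hkx
  obtain ⟨b, hb, hub, hgeb⟩ := exists_first_crossing hu hx₀.2 huq hkx
  refine ⟨a, b, ha.1, ⟨ha.2, hb.1⟩, hb.2, hua, hub, fun y hy => ?_⟩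
  rcases le_total y x₀ with h | h
  exacts [hgea y ⟨hy.1, h⟩, hgeb y ⟨h, hy.2⟩]

lemma sq_integral_le_mul_integral_sq {f : ℝ → ℝ} (hf : Continuous f) {p q : ℝ} (hpq : p ≤ q) :
    (∫ x in p..q, f x) ^ 2 ≤ (q - p) * ∫ x in p..q, f x ^ 2 := by
  rcases hpq.eq_or_lt with rfl | hlt
  · simp
  have hqp : 0 < q - p := sub_pos.2 hlt
  have hint {g : ℝ → ℝ} (hg : Continuous g) : IntervalIntegrable g volume p q :=
    hg.intervalIntegrable p q
  set I := ∫ x in p..q, f x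
  -- expand `0 ≤ ∫ (f - m)²`, where `m` is the mean value of `f`
  have hvar : ∫ x in p..q, (f x - I / (q - p)) ^ 2 =
      (∫ x in p..q, f x ^ 2) - I ^ 2 / (q - p) := by
    have hexp : ∀ x, (f x - I / (q - p)) ^ 2 =
        f x ^ 2 - 2 * (I / (q - p)) * f x + (I / (q - p)) ^ 2 := fun x => by ring
    simp_rw [hexp]
    rw [intervalIntegral.integral_add (hint (by fun_prop)) (hint (by fun_prop)),
      intervalIntegral.integral_sub (hint (by fun_prop)) (hint (by fun_prop)),
      intervalIntegral.integral_const_mul, intervalIntegral.integral_const, smul_eq_mul]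
    field_simp
    ring
  have : 0 ≤ ∫ x in p..q, (f x - I / (q - p)) ^ 2 :=
    intervalIntegral.integral_nonneg hpq fun x _ => sq_nonneg _
  rw [hvar, sub_nonneg, div_le_iff₀ hqp] at this
  linarith

lemma sq_sub_le_mul_integral_deriv_sq {u : ℝ → ℝ} (hu : ContDiff ℝ 1 u) {p q : ℝ} (hpq : p ≤ q) :
    (u q - u p) ^ 2 ≤ (q - p) * ∫ x in p..q, deriv u x ^ 2 := by
  have hu' := hu.continuous_deriv le_rfl
  rw [← intervalIntegral.integral_deriv_eq_sub
    (fun x _ => (hu.differentiable one_ne_zero).differentiableAt) (hu'.intervalIntegrable p q)]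
  exact sq_integral_le_mul_integral_sq hu' hpq

lemma four_mul_sq_le_mul_integral_deriv_sq {u : ℝ → ℝ} (hu : ContDiff ℝ 1 u) {a x₀ b d : ℝ}
    (hax : a ≤ x₀) (hxb : x₀ ≤ b) (hd : 0 ≤ d) (hda : d ≤ u x₀ - u a) (hdb : d ≤ u x₀ - u b) :
    4 * d ^ 2 ≤ (b - a) * ∫ x in a..b, deriv u x ^ 2 := by
  have hint : ∀ p q, IntervalIntegrable (fun x => deriv u x ^ 2) volume p q :=
    ((hu.continuous_deriv le_rfl).pow 2).intervalIntegrable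
  rw [← intervalIntegral.integral_add_adjacent_intervals (hint a x₀) (hint x₀ b)]
  set J₁ := ∫ x in a..x₀, deriv u x ^ 2
  set J₂ := ∫ x in x₀..b, deriv u x ^ 2
  have hJ₁ : 0 ≤ J₁ := intervalIntegral.integral_nonneg hax fun x _ => sq_nonneg _
  have hJ₂ : 0 ≤ J₂ := intervalIntegral.integral_nonneg hxb fun x _ => sq_nonneg _
  have h₁ : d ^ 2 ≤ (x₀ - a) * J₁ :=
    (pow_le_pow_left₀ hd hda 2).trans (sq_sub_le_mul_integral_deriv_sq hu hax)
  have h₂ : d ^ 2 ≤ (b - x₀) * J₂ := by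
    have := sq_sub_le_mul_integral_deriv_sq hu hxb
    rw [← neg_sub, neg_sq] at this
    exact (pow_le_pow_left₀ hd hdb 2).trans this
  -- AM-GM: `(x₀ - a) J₂ + (b - x₀) J₁ ≥ 2 √((x₀ - a) J₁ (b - x₀) J₂) ≥ 2 d²`
  have hcross : 2 * d ^ 2 ≤ (x₀ - a) * J₂ + (b - x₀) * J₁ := by
    have hs : 0 ≤ x₀ - a := sub_nonneg.2 hax
    have ht : 0 ≤ b - x₀ := sub_nonneg.2 hxb
    have hprod : (d ^ 2) ^ 2 ≤ ((x₀ - a) * J₁) * ((b - x₀) * J₂) :=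
      by rw [sq]; exact mul_le_mul h₁ h₂ (sq_nonneg d) (mul_nonneg hs hJ₁)
    nlinarith [sq_nonneg ((x₀ - a) * J₂ - (b - x₀) * J₁), mul_nonneg hs hJ₂, mul_nonneg ht hJ₁]
  nlinarith

/-- `E_Δ(u)` is `energy (Δ^2/4) V u (-1) 1`. -/
noncomputable def energy (c : ℝ) (V u : ℝ → ℝ) (p q : ℝ) : ℝ :=
  ∫ x in p..q, ((1/2) * (deriv u x)^2 + c * V (u x))

section Energy

variable {c : ℝ} {V u : ℝ → ℝ}

lemma energy_add_energy (hV : Continuous V) (hu : ContDiff ℝ 1 u) (p q r : ℝ) :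
    energy c V u p q + energy c V u q r = energy c V u p r := by
  have hu' := hu.continuous_deriv le_rfl
  have hcont : Continuous fun x => (1/2) * (deriv u x)^2 + c * V (u x) := by
    have := hu.continuous
    fun_prop
  exact intervalIntegral.integral_add_adjacent_intervals (hcont.intervalIntegrable _ _)
    (hcont.intervalIntegrable _ _)

lemma energy_congr {w : ℝ → ℝ} {p q : ℝ} (h : ∀ x ∈ uIcc p q, w x = u x ∧ deriv w x = deriv u x) :
    energy c V w p q = energy c V u p q :=
  intervalIntegral.integral_congr fun x hx => by simp only [(h x hx).1, (h x hx).2]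

lemma energy_nonneg (hV0 : ∀ s, 0 ≤ V s) (hc : 0 ≤ c) {p q : ℝ} (hpq : p ≤ q) :
    0 ≤ energy c V u p q :=
  intervalIntegral.integral_nonneg hpq fun x _ => by have := hV0 (u x); positivity

lemma le_energy_of_excursion (hV : Continuous V) (hc : 0 ≤ c) (hu : ContDiff ℝ 1 u)
    {a b x₀ k d : ℝ} (hx₀ : x₀ ∈ Icc a b) (hba : b - a ≤ 2) (hua : u a = k) (hub : u b = k)
    (hge : ∀ y ∈ Icc a b, k ≤ u y) (hVk : ∀ s, k ≤ s → V k ≤ V s) (hd : 0 ≤ d)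
    (hdx : k + d ≤ u x₀) :
    d ^ 2 + c * V k * (b - a) ≤ energy c V u a b := by
  have hab : a ≤ b := hx₀.1.trans hx₀.2
  have hu' := hu.continuous_deriv le_rfl
  have hVu : Continuous fun x => c * V (u x) := by have := hu.continuous; fun_prop
  have hkin : d ^ 2 ≤ ∫ x in a..b, (1/2) * deriv u x ^ 2 := by
    have h4 := four_mul_sq_le_mul_integral_deriv_sq hu hx₀.1 hx₀.2 hd
      (by linarith) (by linarith)
    have hJ : 0 ≤ ∫ x in a..b, deriv u x ^ 2 :=
      intervalIntegral.integral_nonneg hab fun x _ => sq_nonneg _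
    rw [intervalIntegral.integral_const_mul]
    nlinarith
  have hpot : c * V k * (b - a) ≤ ∫ x in a..b, c * V (u x) := by
    have := intervalIntegral.integral_mono_on (μ := volume) hab
      (continuous_const.intervalIntegrable a b) (hVu.intervalIntegrable a b)
      fun x hx => mul_le_mul_of_nonneg_left (hVk _ (hge x hx)) hc
    rwa [intervalIntegral.integral_const, smul_eq_mul, mul_comm] at this
  have hT : Continuous fun x => (1/2) * deriv u x ^ 2 := by fun_prop
  rw [energy,
    intervalIntegral.integral_add (hT.intervalIntegrable a b) (hVu.intervalIntegrable a b)]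
  linarith

end Energy

lemma Real.smoothTransition.deriv_eq_zero {t : ℝ} (ht : t ≤ 0 ∨ 1 ≤ t) :
    deriv smoothTransition t = 0 := by
  -- locally constant off `[0, 1]`; at `0` and `1` by continuity of the derivative
  have hopen : Iio 0 ∪ Ioi 1 ⊆ {s | deriv smoothTransition s = 0} := by
    rintro s (hs | hs)
    · have : smoothTransition =ᶠ[nhds s] fun _ => 0 := by
        filter_upwards [Iio_mem_nhds hs] with r hr
        exact smoothTransition.zero_of_nonpos (le_of_lt hr)
      simp [this.deriv_eq]
    · have : smoothTransition =ᶠ[nhds s] fun _ => 1 := by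
        filter_upwards [Ioi_mem_nhds hs] with r hr
        exact smoothTransition.one_of_one_le (le_of_lt hr)
      simp [this.deriv_eq]
  have hclosed : IsClosed {s | deriv smoothTransition s = 0} :=
    isClosed_eq (smoothTransition.contDiff.continuous_deriv le_rfl) continuous_const
  apply hclosed.closure_subset_iff.2 hopen
  rwa [closure_union, closure_Iio, closure_Ioi]

lemma Real.smoothTransition.exists_abs_deriv_le : ∃ C, ∀ t, |deriv smoothTransition t| ≤ C :=
  (smoothTransition.contDiff.continuous_deriv le_rfl).bounded_above_of_compact_support <|
    HasCompactSupport.intro isCompact_Icc fun t ht => by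
      rw [mem_Icc, not_and_or, not_le, not_le] at ht
      exact smoothTransition.deriv_eq_zero (ht.imp le_of_lt le_of_lt)

/-- Equal to `1` outside `(a, b)` and to `0` on `[a + h, b - h]`, with transition layers of
width `h` at both ends. -/
noncomputable def edgeCutoff (a b h x : ℝ) : ℝ :=
  smoothTransition ((a + h - x) / h) + smoothTransition ((x - (b - h)) / h)

noncomputable def flatten (u : ℝ → ℝ) (k a b h x : ℝ) : ℝ :=
  k + (u x - k) * edgeCutoff a b h x

section Flatten

variable {a b h : ℝ}

lemma contDiff_edgeCutoff {n : ℕ∞} : ContDiff ℝ n (edgeCutoff a b h) :=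
  (smoothTransition.contDiff.comp (by fun_prop)).add (smoothTransition.contDiff.comp (by fun_prop))

lemma deriv_edgeCutoff (x : ℝ) :
    deriv (edgeCutoff a b h) x = (deriv smoothTransition ((x - (b - h)) / h) -
      deriv smoothTransition ((a + h - x) / h)) / h := by
  have hst (t : ℝ) : HasDerivAt smoothTransition (deriv smoothTransition t) t :=
    (smoothTransition.contDiff (n := 1).differentiable one_ne_zero t).hasDerivAt
  have h₁ := (hst ((a + h - x) / h)).comp x (((hasDerivAt_id x).const_sub (a + h)).div_const h)
  have h₂ := (hst ((x - (b - h)) / h)).comp x (((hasDerivAt_id x).sub_const (b - h)).div_const h)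
  calc deriv (edgeCutoff a b h) x = _ := (h₁.add h₂).deriv
    _ = _ := by ring

lemma edgeCutoff_eq_one (hh : 0 < h) (hhab : h ≤ b - a) {x : ℝ} (hx : x ≤ a ∨ b ≤ x) :
    edgeCutoff a b h x = 1 ∧ deriv (edgeCutoff a b h) x = 0 := by
  rcases hx with hx | hx
  · have h₁ : 1 ≤ (a + h - x) / h := by rw [le_div_iff₀ hh]; linarith
    have h₂ : (x - (b - h)) / h ≤ 0 := div_nonpos_of_nonpos_of_nonneg (by linarith) hh.le
    simp [edgeCutoff, deriv_edgeCutoff, smoothTransition.one_of_one_le h₁,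
      smoothTransition.zero_of_nonpos h₂, smoothTransition.deriv_eq_zero (.inr h₁),
      smoothTransition.deriv_eq_zero (.inl h₂)]
  · have h₁ : (a + h - x) / h ≤ 0 := div_nonpos_of_nonpos_of_nonneg (by linarith) hh.le
    have h₂ : 1 ≤ (x - (b - h)) / h := by rw [le_div_iff₀ hh]; linarith
    simp [edgeCutoff, deriv_edgeCutoff, smoothTransition.one_of_one_le h₂,
      smoothTransition.zero_of_nonpos h₁, smoothTransition.deriv_eq_zero (.inr h₂),
      smoothTransition.deriv_eq_zero (.inl h₁)]

lemma edgeCutoff_eq_zero (hh : 0 < h) {x : ℝ} (hx : x ∈ Icc (a + h) (b - h)) :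
    edgeCutoff a b h x = 0 ∧ deriv (edgeCutoff a b h) x = 0 := by
  have h₁ : (a + h - x) / h ≤ 0 := div_nonpos_of_nonpos_of_nonneg (by linarith [hx.1]) hh.le
  have h₂ : (x - (b - h)) / h ≤ 0 := div_nonpos_of_nonpos_of_nonneg (by linarith [hx.2]) hh.le
  simp [edgeCutoff, deriv_edgeCutoff, smoothTransition.zero_of_nonpos h₁,
    smoothTransition.zero_of_nonpos h₂, smoothTransition.deriv_eq_zero (.inl h₁),
    smoothTransition.deriv_eq_zero (.inl h₂)]

lemma abs_edgeCutoff_le (x : ℝ) : |edgeCutoff a b h x| ≤ 2 := by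
  rw [abs_le, edgeCutoff]
  constructor <;> linarith [smoothTransition.nonneg ((a + h - x) / h),
    smoothTransition.nonneg ((x - (b - h)) / h), smoothTransition.le_one ((a + h - x) / h),
    smoothTransition.le_one ((x - (b - h)) / h)]

lemma abs_deriv_edgeCutoff_le {S : ℝ} (hS : ∀ t, |deriv smoothTransition t| ≤ S) (hh : 0 < h)
    (x : ℝ) : |deriv (edgeCutoff a b h) x| ≤ 2 * S / h := by
  rw [deriv_edgeCutoff, abs_div, abs_of_pos hh]
  gcongr
  exact (abs_sub _ _).trans (by linarith [hS ((x - (b - h)) / h), hS ((a + h - x) / h)])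

variable {u : ℝ → ℝ} {k : ℝ}

lemma contDiff_flatten (hu : ContDiff ℝ 1 u) : ContDiff ℝ 1 (flatten u k a b h) :=
  contDiff_const.add ((hu.sub contDiff_const).mul contDiff_edgeCutoff)

lemma deriv_flatten (hu : ContDiff ℝ 1 u) (x : ℝ) : deriv (flatten u k a b h) x =
    deriv u x * edgeCutoff a b h x + (u x - k) * deriv (edgeCutoff a b h) x := by
  have hu' := (hu.differentiable one_ne_zero x).hasDerivAt
  have hχ := ((contDiff_edgeCutoff (a := a) (b := b) (h := h) (n := 1)).differentiable
    one_ne_zero x).hasDerivAt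
  exact (((hu'.sub_const k).mul hχ).const_add k).deriv

lemma flatten_eq_self (hu : ContDiff ℝ 1 u) (hh : 0 < h) (hhab : h ≤ b - a) {x : ℝ}
    (hx : x ≤ a ∨ b ≤ x) :
    flatten u k a b h x = u x ∧ deriv (flatten u k a b h) x = deriv u x := by
  obtain ⟨h₁, h₂⟩ := edgeCutoff_eq_one hh hhab hx
  simp [flatten, deriv_flatten hu, h₁, h₂]

lemma flatten_eq_const (hu : ContDiff ℝ 1 u) (hh : 0 < h) {x : ℝ}
    (hx : x ∈ Icc (a + h) (b - h)) :
    flatten u k a b h x = k ∧ deriv (flatten u k a b h) x = 0 := by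
  obtain ⟨h₁, h₂⟩ := edgeCutoff_eq_zero hh hx
  simp [flatten, deriv_flatten hu, h₁, h₂]

lemma abs_flatten_sub_le (x : ℝ) : |flatten u k a b h x - k| ≤ 2 * |u x - k| := by
  rw [flatten, add_sub_cancel_left, abs_mul, mul_comm]
  exact mul_le_mul_of_nonneg_right (abs_edgeCutoff_le x) (abs_nonneg _)

lemma abs_deriv_flatten_le (hu : ContDiff ℝ 1 u) {S L : ℝ}
    (hS : ∀ t, |deriv smoothTransition t| ≤ S) (hh : 0 < h) {x : ℝ} (hux : |deriv u x| ≤ L)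
    (huk : |u x - k| ≤ L * h) :
    |deriv (flatten u k a b h) x| ≤ 2 * L + 2 * L * S := by
  rw [deriv_flatten hu]
  have hχ := abs_edgeCutoff_le (a := a) (b := b) (h := h) x
  have hχ' := abs_deriv_edgeCutoff_le (a := a) (b := b) hS hh x
  calc _ ≤ |deriv u x| * |edgeCutoff a b h x| + |u x - k| * |deriv (edgeCutoff a b h) x| := by
        rw [← abs_mul, ← abs_mul]; exact abs_add_le _ _
    _ ≤ L * 2 + L * h * (2 * S / h) := by
        gcongr
        exacts [(abs_nonneg _).trans hux, (abs_nonneg _).trans huk]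
    _ = 2 * L + 2 * L * S := by field_simp

end Flatten

section FlattenEnergy

variable {c : ℝ} {V u : ℝ → ℝ} {k a b : ℝ}

lemma energy_flatten_le (hV : Continuous V) (hu : ContDiff ℝ 1 u) (hab : a ≤ b) (hua : u a = k)
    (hub : u b = k) : ∃ D, ∀ h, 0 < h → 2 * h ≤ b - a →
      energy c V (flatten u k a b h) a b ≤ c * V k * (b - a) + D * h := by
  obtain ⟨L, hL⟩ := isCompact_Icc.exists_bound_of_continuousOn (s := Icc a b)
    (hu.continuous_deriv le_rfl).continuousOn
  have hL0 : 0 ≤ L := (norm_nonneg _).trans (hL a ⟨le_rfl, hab⟩)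
  obtain ⟨S, hS⟩ := smoothTransition.exists_abs_deriv_le
  obtain ⟨C, hC⟩ := isCompact_Icc.exists_bound_of_continuousOn
    (s := Icc (k - L * (b - a)) (k + L * (b - a))) hV.continuousOn
  set D₀ := (1/2) * (2 * L + 2 * L * S) ^ 2 + |c| * C
  refine ⟨2 * D₀ - 2 * c * V k, fun h hh hhab => ?_⟩
  set w := flatten u k a b h
  have hw := contDiff_flatten (k := k) (a := a) (b := b) (h := h) hu
  have hlayer : ∀ x ∈ Icc a b, (x ≤ a + h ∨ b - h ≤ x) → |u x - k| ≤ L * h := by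
    intro x hx hxh
    have hlip : ∀ y ∈ Icc a b, |u x - u y| ≤ L * |x - y| := fun y hy =>
      (convex_Icc a b).norm_image_sub_le_of_norm_deriv_le
        (fun z _ => (hu.differentiable one_ne_zero z)) hL hy hx
    rcases hxh with hxh | hxh
    · calc |u x - k| ≤ L * |x - a| := hua ▸ hlip a ⟨le_rfl, hab⟩
        _ ≤ L * h := by gcongr; rw [abs_le]; constructor <;> linarith [hx.1]
    · calc |u x - k| ≤ L * |x - b| := hub ▸ hlip b ⟨hab, le_rfl⟩
        _ ≤ L * h := by gcongr; rw [abs_le]; constructor <;> linarith [hx.2]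
  have hdensity : ∀ x ∈ Icc a b, (x ≤ a + h ∨ b - h ≤ x) →
      ‖(1/2) * deriv w x ^ 2 + c * V (w x)‖ ≤ D₀ := by
    intro x hx hxh
    have huk := hlayer x hx hxh
    have hdw : |deriv w x| ≤ 2 * L + 2 * L * S := abs_deriv_flatten_le hu hS hh (hL x hx) huk
    have hwk : |w x - k| ≤ L * (b - a) := by
      have : |w x - k| ≤ 2 * |u x - k| := abs_flatten_sub_le x
      nlinarith
    have hVw : |V (w x)| ≤ C := hC _ (by
      rw [mem_Icc, sub_le_comm, ← sub_le_iff_le_add', ← abs_sub_le_iff, abs_sub_comm]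
      exact hwk)
    rw [Real.norm_eq_abs]
    calc _ ≤ (1/2) * |deriv w x| ^ 2 + |c| * |V (w x)| := by
          rw [sq_abs, ← abs_mul]
          exact (abs_add_le _ _).trans (by rw [abs_of_nonneg (by positivity)])
      _ ≤ (1/2) * (2 * L + 2 * L * S) ^ 2 + |c| * C := by gcongr
  have hedge {p q : ℝ} (hpq : p ≤ q) (hqp : q - p = h)
      (hlay : ∀ x ∈ Ioc p q, x ∈ Icc a b ∧ (x ≤ a + h ∨ b - h ≤ x)) :
      energy c V w p q ≤ D₀ * h := by
    have := intervalIntegral.norm_integral_le_of_norm_le_const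
        (f := fun x => (1/2) * deriv w x ^ 2 + c * V (w x)) fun x hx => by
      rw [uIoc_of_le hpq] at hx
      exact hdensity x (hlay x hx).1 (hlay x hx).2
    rw [abs_of_nonneg (sub_nonneg.2 hpq), hqp] at this
    exact (le_abs_self _).trans this
  have hmid : energy c V w (a + h) (b - h) = c * V k * (b - a - 2 * h) := by
    have hconst : ∀ x ∈ uIcc (a + h) (b - h), (1/2) * deriv w x ^ 2 + c * V (w x) = c * V k := by
      intro x hx
      rw [uIcc_of_le (by linarith)] at hx
      obtain ⟨h₁, h₂⟩ := flatten_eq_const (k := k) hu hh hx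
      simp [w, h₁, h₂]
    rw [energy, intervalIntegral.integral_congr hconst, intervalIntegral.integral_const,
      smul_eq_mul]
    ring
  have hleft := hedge (p := a) (q := a + h) (by linarith) (by ring) fun x hx =>
    ⟨⟨hx.1.le, by linarith [hx.2]⟩, .inl hx.2⟩
  have hright := hedge (p := b - h) (q := b) (by linarith) (by ring) fun x hx =>
    ⟨⟨by linarith [hx.1], hx.2⟩, .inr hx.1.le⟩
  rw [← energy_add_energy hV hw a (b - h) b, ← energy_add_energy hV hw a (a + h) (b - h), hmid]
  linarith

lemma exists_flattened_energy_le (hV : Continuous V) (hu : ContDiff ℝ 1 u) {p q : ℝ}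
    (hpa : p ≤ a) (hab : a < b) (hbq : b ≤ q) (hua : u a = k) (hub : u b = k) {δ : ℝ}
    (hδ : 0 < δ) : ∃ w, ContDiff ℝ 1 w ∧ w p = u p ∧ w q = u q ∧
      energy c V w p q ≤ energy c V u p q - energy c V u a b + c * V k * (b - a) + δ := by
  obtain ⟨D, hD⟩ := energy_flatten_le (c := c) hV hu hab.le hua hub
  set h := min ((b - a) / 2) (δ / (|D| + 1))
  have hh : 0 < h := lt_min (by linarith) (by positivity)
  have h2h : 2 * h ≤ b - a := by linarith [min_le_left ((b - a) / 2) (δ / (|D| + 1))]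
  have hDh : D * h ≤ δ := calc
    D * h ≤ |D| * (δ / (|D| + 1)) := by gcongr; exacts [le_abs_self D, min_le_right _ _]
    _ ≤ δ := by rw [mul_div_assoc', div_le_iff₀ (by positivity)]; nlinarith [abs_nonneg D]
  have hout : ∀ x, x ≤ a ∨ b ≤ x →
      flatten u k a b h x = u x ∧ deriv (flatten u k a b h) x = deriv u x :=
    fun x => flatten_eq_self hu hh (by linarith)
  have hw := contDiff_flatten (k := k) (a := a) (b := b) (h := h) hu
  refine ⟨flatten u k a b h, hw, (hout p (.inl hpa)).1, (hout q (.inr hbq)).1, ?_⟩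
  have hsplit {v : ℝ → ℝ} (hv : ContDiff ℝ 1 v) :
      energy c V v p q = energy c V v p a + energy c V v a b + energy c V v b q := by
    rw [energy_add_energy hV hv, energy_add_energy hV hv]
  rw [hsplit hw, hsplit hu, energy_congr (p := p) (q := a) fun x hx => hout x (.inl (by
      rw [uIcc_of_le hpa] at hx; exact hx.2)), energy_congr (p := b) (q := q) fun x hx =>
      hout x (.inr (by rw [uIcc_of_le hbq] at hx; exact hx.1))]
  linarith [hD h hh h2h]

end FlattenEnergy

def boundaryValueEnergies (c : ℝ) (V : ℝ → ℝ) (k : ℝ) : Set ℝ :=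
  {e | ∃ u : ℝ → ℝ, ContDiff ℝ 1 u ∧ u (-1) = k ∧ u 1 = k ∧ e = energy c V u (-1) 1}

lemma bddBelow_boundaryValueEnergies {c : ℝ} {V : ℝ → ℝ} (hV0 : ∀ s, 0 ≤ V s) (hc : 0 ≤ c)
    (k : ℝ) : BddBelow (boundaryValueEnergies c V k) :=
  ⟨0, by rintro _ ⟨u, -, -, -, rfl⟩; exact energy_nonneg hV0 hc (by norm_num)⟩

theorem high_excursion_cost_general
    (V : ℝ → ℝ) (hVc : Continuous V) (hV0 : ∀ s, 0 ≤ V s)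
    (M : ℝ) (hM : 4 ≤ M) (hVM : ∀ u : ℝ, 3*M ≤ u → V (3*M) ≤ V u)
    (Δ : ℝ) :
    (M - 1)^2 ≤
      sInf {e : ℝ | ∃ u : ℝ → ℝ, ContDiff ℝ 1 u ∧
          u (-1) = 3*M ∧ u 1 = 3*M ∧
          (∃ x₀ ∈ Set.Icc (-1:ℝ) 1, 4*M - 1 ≤ u x₀) ∧
          e = ∫ x in (-1:ℝ)..1, ((1/2) * (deriv u x)^2 + (Δ^2/4) * V (u x))} -
      sInf {e : ℝ | ∃ u : ℝ → ℝ, ContDiff ℝ 1 u ∧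
          u (-1) = 3*M ∧ u 1 = 3*M ∧
          e = ∫ x in (-1:ℝ)..1, ((1/2) * (deriv u x)^2 + (Δ^2/4) * V (u x))} := by
  change (M - 1)^2 ≤ sInf _ - sInf (boundaryValueEnergies (Δ^2/4) V (3*M))
  have hc : 0 ≤ Δ^2/4 := by positivity
  -- the parabola `3M + (M - 1)(1 - x²)` reaches `4M - 1` at `0`
  refine le_sub_iff_add_le'.2 (le_csInf ⟨_, fun x => 3*M + (M-1)*(1-x^2), by fun_prop,
    by norm_num, by norm_num, ⟨0, by norm_num, by norm_num; linarith⟩, rfl⟩ ?_)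
  rintro _ ⟨u, hu, huL, huR, ⟨x₀, hx₀, hux₀⟩, rfl⟩
  obtain ⟨a, b, ha, hx₀ab, hb, hua, hub, hge⟩ :=
    exists_excursion_interval hu.continuous hx₀ huL.le huR.le (by linarith)
  have hab : a < b := lt_of_lt_of_le (lt_of_le_of_ne hx₀ab.1 fun h => by
    rw [h] at hua; linarith) hx₀ab.2
  have hgain : (M - 1)^2 + Δ^2/4 * V (3*M) * (b - a) ≤ energy (Δ^2/4) V u a b :=
    le_energy_of_excursion hVc hc hu hx₀ab (by linarith) hua hub hge hVM (by linarith)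
      (by linarith)
  change _ ≤ energy (Δ^2/4) V u (-1) 1
  refine le_of_forall_pos_le_add fun δ hδ => ?_
  obtain ⟨w, hw, hwL, hwR, hEw⟩ :=
    exists_flattened_energy_le hVc hu ha hab hb hua hub hδ (c := Δ^2/4)
  have := csInf_le (bddBelow_boundaryValueEnergies hV0 hc _)
    ⟨w, hw, hwL.trans huL, hwR.trans huR, rfl⟩
  linarith

/-- Variational cost of a high excursion (from the proof of Lemma 3.1, Step 2): with
`E_Δ(u) = ∫_{−1}^{1} ((1/2) u'² + (Δ²/4) V(u))`, boundary values `3M` at `±1`, and the extra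
constraint that `u` reaches `4M − 1` somewhere in `[−1, 1]`, the minimal energy increases by
at least `(M − 1)²`. -/
theorem high_excursion_cost
    (V : ℝ → ℝ) (hVc : Continuous V) (hV0 : ∀ s, 0 ≤ V s)
    (M : ℝ) (hM : 4 ≤ M) (hVM : ∀ u : ℝ, 3*M ≤ u → V (3*M) ≤ V u)
    (Δ : ℝ) (hΔ : Δ ∈ Set.Ioc (0:ℝ) 2) :
    (M - 1)^2 ≤
      sInf {e : ℝ | ∃ u : ℝ → ℝ, ContDiff ℝ 1 u ∧
          u (-1) = 3*M ∧ u 1 = 3*M ∧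
          (∃ x₀ ∈ Set.Icc (-1:ℝ) 1, 4*M - 1 ≤ u x₀) ∧
          e = ∫ x in (-1:ℝ)..1, ((1/2) * (deriv u x)^2 + (Δ^2/4) * V (u x))} -
      sInf {e : ℝ | ∃ u : ℝ → ℝ, ContDiff ℝ 1 u ∧
          u (-1) = 3*M ∧ u 1 = 3*M ∧
          e = ∫ x in (-1:ℝ)..1, ((1/2) * (deriv u x)^2 + (Δ^2/4) * V (u x))} :=
  high_excursion_cost_general V hVc hV0 M hM hVM Δ
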